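/- The operators Z, T_1, T_0 on Laurent polynomials satisfy the commutation relations T_1 Z = Z^{-1} T_1 + (ab+1)Z^{-1} − (a+b) and T_0 Z = q Z^{-1} T_0 − (q^{-1}cd + 1)Z + (c+d). -/

import Mathlib

open scoped BigOperators

noncomputable section

/-- The field of rational functions over ℂ, in which Laurent polynomials live. -/
local notation "F" => RatFunc ℂ

/-- Scalar constants in `F`. -/
def Cc (x : ℂ) : F := RatFunc.C x

/-- The variable `z`. -/
def Xv : F := RatFunc.X

/-- Substitution `z ↦ t` in a rational function (well defined since the
substitution points used here are transcendental over ℂ). -/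
def subst (t : F) (f : F) : F := RatFunc.eval (RatFunc.C) t f

/-- `f` is a Laurent polynomial in `z`. -/
def IsLaurent (f : F) : Prop :=
  ∃ (p : Polynomial ℂ) (n : ℕ), f = algebraMap (Polynomial ℂ) F p / Xv ^ n

/-- The DAHA operator `T₁` of the basic representation. -/
def T1op (a b : ℂ) (f : F) : F :=
  ((Cc a + Cc b) * Xv - (1 + Cc a * Cc b)) / (1 - Xv ^ 2) * f
    + ((1 - Cc a * Xv) * (1 - Cc b * Xv)) / (1 - Xv ^ 2) * subst Xv⁻¹ f

/-- The DAHA operator `T₀` of the basic representation. -/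
def T0op (q c d : ℂ) (f : F) : F :=
  (Cc q)⁻¹ * Xv * ((Cc c * Cc d + Cc q) * Xv - (Cc c + Cc d) * Cc q) / (Cc q - Xv ^ 2) * f
    - ((Cc c - Xv) * (Cc d - Xv)) / (Cc q - Xv ^ 2) * subst (Cc q * Xv⁻¹) f

/-- The inverse of `T₁`: `T₁⁻¹ = -(ab)⁻¹T₁ - (1 + (ab)⁻¹)`. -/
def T1inv (a b : ℂ) (f : F) : F :=
  -(Cc a * Cc b)⁻¹ * T1op a b f - (1 + (Cc a * Cc b)⁻¹) * f

/-- The inverse of `T₀`: `T₀⁻¹ = -q(cd)⁻¹T₀ - (1 + q(cd)⁻¹)`. -/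
def T0inv (q c d : ℂ) (f : F) : F :=
  -(Cc q * (Cc c * Cc d)⁻¹) * T0op q c d f - (1 + Cc q * (Cc c * Cc d)⁻¹) * f

/-- `Y = T₁T₀`. -/
def Yop (q a b c d : ℂ) (f : F) : F := T1op a b (T0op q c d f)

/-- `Y⁻¹ = T₀⁻¹T₁⁻¹`. -/
def Yinv (q a b c d : ℂ) (f : F) : F := T0inv q c d (T1inv a b f)

/-- `D = Y + q⁻¹abcd·Y⁻¹`. -/
def Dop (q a b c d : ℂ) (f : F) : F :=
  Yop q a b c d f + Cc (q⁻¹ * (a * b * c * d)) * Yinv q a b c d f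

/-- The Askey–Wilson second order q-difference operator `D_sym`. -/
def DsymOp (q a b c d : ℂ) (f : F) : F :=
  ((1 - Cc a * Xv) * (1 - Cc b * Xv) * (1 - Cc c * Xv) * (1 - Cc d * Xv)) /
      ((1 - Xv ^ 2) * (1 - Cc q * Xv ^ 2)) * (subst (Cc q * Xv) f - f)
    + ((Cc a - Xv) * (Cc b - Xv) * (Cc c - Xv) * (Cc d - Xv)) /
      ((1 - Xv ^ 2) * (Cc q - Xv ^ 2)) * (subst ((Cc q)⁻¹ * Xv) f - f)
    + (1 + (Cc q)⁻¹ * Cc a * Cc b * Cc c * Cc d) * f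

/-- q-Pochhammer symbol `(x;q)_k`. -/
def qPoch (x q : ℂ) (k : ℕ) : ℂ := ∏ j ∈ Finset.range k, (1 - x * q ^ j)

/-- The monic Askey–Wilson Laurent polynomial `P_n[z;a,b,c,d|q]`. -/
def AWP (q a b c d : ℂ) (n : ℕ) : F :=
  Cc (a⁻¹ ^ n) * ∑ k ∈ Finset.range (n + 1),
    Cc (qPoch (q⁻¹ ^ n) q k * qPoch (a * b * q ^ k) q (n - k) * qPoch (a * c * q ^ k) q (n - k)
        * qPoch (a * d * q ^ k) q (n - k) * q ^ k
        / (qPoch q q k * qPoch (a * b * c * d * q ^ (n + k) / q) q (n - k)))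
      * (∏ j ∈ Finset.range k, (1 - Cc a * Xv * Cc (q ^ j)))
      * (∏ j ∈ Finset.range k, (1 - Cc a * Xv⁻¹ * Cc (q ^ j)))

/-- `Q_n[z] := (ab)⁻¹ z⁻¹ (1-az)(1-bz) P_{n-1}[z;qa,qb,c,d|q]`. -/
def Qpoly (q a b c d : ℂ) (n : ℕ) : F :=
  (Cc (a * b))⁻¹ * Xv⁻¹ * (1 - Cc a * Xv) * (1 - Cc b * Xv) *
    AWP q (q * a) (q * b) c d (n - 1)

/-- Elementary symmetric polynomials in a,b,c,d. -/
def esym1 (a b c d : ℂ) : ℂ := a + b + c + d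
def esym2 (a b c d : ℂ) : ℂ := a*b + a*c + b*c + a*d + b*d + c*d
def esym3 (a b c d : ℂ) : ℂ := a*b*c + a*b*d + a*c*d + b*c*d
def esym4 (a b c d : ℂ) : ℂ := a*b*c*d

lemma Xv_ne_zero : Xv ≠ 0 := RatFunc.X_ne_zero

lemma Cc_ne_zero {x : ℂ} (hx : x ≠ 0) : Cc x ≠ 0 := (map_ne_zero RatFunc.C).mpr hx

lemma Cc_sub_Xv_sq_ne_zero (x : ℂ) : Cc x - Xv ^ 2 ≠ 0 := by
  have h : Cc x - Xv ^ 2 = -algebraMap (Polynomial ℂ) F (Polynomial.X ^ 2 - Polynomial.C x) := by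
    simp [Cc, Xv, RatFunc.algebraMap_X, RatFunc.algebraMap_C]
  rw [h, neg_ne_zero]
  exact RatFunc.algebraMap_ne_zero (Polynomial.X_pow_sub_C_ne_zero two_pos x)

lemma one_sub_Xv_sq_ne_zero : (1 - Xv ^ 2 : F) ≠ 0 := by
  simpa [Cc] using Cc_sub_Xv_sq_ne_zero 1

/-- The denominator divides `z ^ n`, so substituting `t ≠ 0` never hits a pole, where
`RatFunc.eval` would return the junk value `0`. -/
lemma IsLaurent.eval₂_denom_ne_zero {f : F} (hf : IsLaurent f) {t : F} (ht : t ≠ 0) :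
    Polynomial.eval₂ RatFunc.C t f.denom ≠ 0 := by
  obtain ⟨p, n, rfl⟩ := hf
  have hdvd : (algebraMap (Polynomial ℂ) F p / Xv ^ n).denom ∣ Polynomial.X ^ n := by
    simpa [Xv, RatFunc.algebraMap_X] using RatFunc.denom_div_dvd p (Polynomial.X ^ n)
  intro h
  have := Polynomial.eval₂_eq_zero_of_dvd_of_eval₂_eq_zero _ _ hdvd h
  exact pow_ne_zero n ht (by simpa using this)

lemma IsLaurent.subst_Xv_mul {f : F} (hf : IsLaurent f) {t : F} (ht : t ≠ 0) :
    subst t (Xv * f) = t * subst t f := by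
  have hX : Polynomial.eval₂ RatFunc.C t (Xv : F).denom ≠ 0 := by simp [Xv]
  simpa [subst, Xv] using RatFunc.eval_mul RatFunc.C t hX (hf.eval₂_denom_ne_zero ht)

lemma IsLaurent.T1op_Xv_mul (a b : ℂ) {f : F} (hf : IsLaurent f) :
    T1op a b (Xv * f) = Xv⁻¹ * T1op a b f + Cc (a * b + 1) * (Xv⁻¹ * f) - Cc (a + b) * f := by
  have := one_sub_Xv_sq_ne_zero
  have := Xv_ne_zero
  rw [T1op, T1op, hf.subst_Xv_mul (inv_ne_zero Xv_ne_zero)]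
  simp only [Cc, map_add, map_mul, map_one]
  field_simp
  ring

lemma IsLaurent.T0op_Xv_mul {q : ℂ} (hq : q ≠ 0) (c d : ℂ) {f : F} (hf : IsLaurent f) :
    T0op q c d (Xv * f)
      = Cc q * (Xv⁻¹ * T0op q c d f) - Cc (q⁻¹ * (c * d) + 1) * (Xv * f) + Cc (c + d) * f := by
  have := Cc_sub_Xv_sq_ne_zero q
  have := Cc_ne_zero hq
  have := Xv_ne_zero
  rw [T0op, T0op, hf.subst_Xv_mul (mul_ne_zero (Cc_ne_zero hq) (inv_ne_zero Xv_ne_zero))]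
  simp only [Cc, map_add, map_mul, map_one, map_inv₀] at *
  field_simp
  ring

theorem stmt12_general (q a b c d : ℂ) (hq : q ≠ 0) :
    ∀ f : RatFunc ℂ, IsLaurent f →
      T1op a b (Xv * f)
          = Xv⁻¹ * T1op a b f + Cc (a * b + 1) * (Xv⁻¹ * f) - Cc (a + b) * f
        ∧ T0op q c d (Xv * f)
          = Cc q * (Xv⁻¹ * T0op q c d f) - Cc (q⁻¹ * (c * d) + 1) * (Xv * f)
            + Cc (c + d) * f :=
  fun _ hf => ⟨hf.T1op_Xv_mul a b, hf.T0op_Xv_mul hq c d⟩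

theorem stmt12 (q a b c d : ℂ) (hq : q ≠ 0) (hroot : ∀ m : ℕ, 1 ≤ m → q ^ m ≠ 1)
    (ha : a ≠ 0) (hb : b ≠ 0) (hc : c ≠ 0) (hd : d ≠ 0) :
    ∀ f : RatFunc ℂ, IsLaurent f →
      T1op a b (Xv * f)
          = Xv⁻¹ * T1op a b f + Cc (a * b + 1) * (Xv⁻¹ * f) - Cc (a + b) * f
        ∧ T0op q c d (Xv * f)
          = Cc q * (Xv⁻¹ * T0op q c d f) - Cc (q⁻¹ * (c * d) + 1) * (Xv * f)
            + Cc (c + d) * f :=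
  stmt12_general q a b c d hq

end
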